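/- If (λK(t) − K'(t)) ≥ δ > 0 on [0,T] and w ∈ C¹([0,T]) satisfies γ w(0) = w(T) with γ² = e^{λT}, λ > 0, then 2∫₀^T e^{−λt} K(t) w(t) w'(t) dt ≥ δ e^{−λT} ∫₀^T w(t)² dt. -/

import Mathlib

theorem zeroth_order_term_lower_bound
    (T lam δ γ : ℝ) (hT : 0 < T) (hlam : 0 < lam) (hδ : 0 < δ)
    (hγ : γ ^ 2 = Real.exp (lam * T))
    (K : ℝ → ℝ) (hK : ContDiff ℝ 1 K) (hKper : K 0 = K T)
    (hKpos : ∀ t ∈ Set.Icc (0:ℝ) T, δ ≤ lam * K t - deriv K t)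
    (w : ℝ → ℝ) (hw : ContDiff ℝ 1 w)
    (hbc : γ * w 0 = w T) :
    δ * Real.exp (-lam * T) * ∫ t in (0:ℝ)..T, (w t) ^ 2
      ≤ 2 * ∫ t in (0:ℝ)..T, Real.exp (-lam * t) * K t * w t * deriv w t := by
  have hKd : Differentiable ℝ K := hK.differentiable one_ne_zero
  have hwd : Differentiable ℝ w := hw.differentiable one_ne_zero
  have hKc : Continuous (deriv K) := hK.continuous_deriv le_rfl
  have hwc : Continuous (deriv w) := hw.continuous_deriv le_rfl
  have cExp : Continuous fun t : ℝ => Real.exp (-lam * t) := by continuity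
  set A : ℝ → ℝ := fun t => Real.exp (-lam * t) * (lam * K t - deriv K t) * (w t) ^ 2 with hA
  set B : ℝ → ℝ := fun t => Real.exp (-lam * t) * K t * w t * deriv w t with hB
  have cA : Continuous A := by
    apply Continuous.mul
    · exact cExp.mul (((continuous_const.mul hKd.continuous).sub hKc))
    · exact (hwd.continuous).pow 2
  have cB : Continuous B :=
    ((cExp.mul hKd.continuous).mul hwd.continuous).mul hwc
  have hiA : IntervalIntegrable A MeasureTheory.volume 0 T := cA.intervalIntegrable _ _
  have hiB : IntervalIntegrable B MeasureTheory.volume 0 T := cB.intervalIntegrable _ _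
  have hderiv : ∀ t ∈ Set.uIcc (0:ℝ) T,
      HasDerivAt (fun t => Real.exp (-lam * t) * K t * (w t) ^ 2) (2 * B t - A t) t := by
    intro t _
    have hE : HasDerivAt (fun t : ℝ => Real.exp (-lam * t)) (-lam * Real.exp (-lam * t)) t := by
      have h1 : HasDerivAt (fun t : ℝ => -lam * t) (-lam) t := by
        simpa using (hasDerivAt_id t).const_mul (-lam)
      simpa [mul_comm] using h1.exp
    have h : HasDerivAt (fun t => Real.exp (-lam * t) * K t * (w t) ^ 2) _ t := (hE.fun_mul (hKd t).hasDerivAt).fun_mul ((hwd t).hasDerivAt.fun_pow 2)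
    convert h using 1
    simp only [hA, hB, pow_one, Nat.cast_ofNat]
    ring
  have hcont : IntervalIntegrable (fun t => 2 * B t - A t) MeasureTheory.volume 0 T :=
    (hiB.const_mul 2).sub hiA
  have hFTC := intervalIntegral.integral_eq_sub_of_hasDerivAt hderiv hcont
  have e1 : Real.exp (-lam * T) * Real.exp (lam * T) = 1 := by
    rw [← Real.exp_add]; simp
  have hwT : (w T) ^ 2 = Real.exp (lam * T) * (w 0) ^ 2 := by
    rw [← hbc, ← hγ]; ring
  have hbdry : Real.exp (-lam * T) * K T * (w T) ^ 2
      - Real.exp (-lam * 0) * K 0 * (w 0) ^ 2 = 0 := by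
    rw [hwT]
    have h0 : Real.exp (-lam * 0) = 1 := by simp
    rw [h0]
    linear_combination K T * (w 0) ^ 2 * e1 - (w 0) ^ 2 * hKper
  have hsplit : (∫ t in (0:ℝ)..T, (2 * B t - A t))
      = 2 * (∫ t in (0:ℝ)..T, B t) - ∫ t in (0:ℝ)..T, A t := by
    rw [intervalIntegral.integral_sub (hiB.const_mul 2) hiA,
      intervalIntegral.integral_const_mul]
  have hkey : 2 * (∫ t in (0:ℝ)..T, B t) = ∫ t in (0:ℝ)..T, A t := by
    rw [hsplit] at hFTC
    rw [hbdry] at hFTC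
    linarith
  have hmono : (∫ t in (0:ℝ)..T, δ * Real.exp (-lam * T) * (w t) ^ 2)
      ≤ ∫ t in (0:ℝ)..T, A t := by
    apply intervalIntegral.integral_mono_on hT.le
    · exact (Continuous.intervalIntegrable (continuous_const.mul (hwd.continuous.pow 2)) _ _)
    · exact hiA
    · intro t ht
      have h1 : Real.exp (-lam * T) ≤ Real.exp (-lam * t) := by
        apply Real.exp_le_exp.2
        nlinarith [ht.2]
      have h2 := hKpos t ht
      have h3 : δ * Real.exp (-lam * T) ≤ (lam * K t - deriv K t) * Real.exp (-lam * t) :=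
        mul_le_mul h2 h1 (Real.exp_pos _).le (hδ.le.trans h2)
      have h4 := mul_le_mul_of_nonneg_right h3 (sq_nonneg (w t))
      simp only [hA]
      nlinarith [h4]
  have hLHS : (∫ t in (0:ℝ)..T, δ * Real.exp (-lam * T) * (w t) ^ 2)
      = δ * Real.exp (-lam * T) * ∫ t in (0:ℝ)..T, (w t) ^ 2 := by
    rw [intervalIntegral.integral_const_mul]
  rw [← hLHS]
  rw [show (∫ t in (0:ℝ)..T, Real.exp (-lam * t) * K t * w t * deriv w t)
      = ∫ t in (0:ℝ)..T, B t from rfl]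
  linarith
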